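/- Let Σ ∈ ℝ^{d×d} be a constant symmetric positive semidefinite matrix and let f : ℝ^d → ℝ be C² and κ-strongly convex (κ > 0) with minimizer x* (so ∇f(x*) = 0). Let p : [0,∞) × ℝ^d → [0,∞) be C^{1,2} such that each p(t,·) is a probability density and ∂_t p = ∇·(∇f · p) + (1/2) ∑_{i,j} Σ_{ij} ∂²_{x_i x_j} p pointwise. Define V(t) = (1/2) ∫ ‖x − x*‖² p(t,x) dx and assume: V(t) < ∞ for all t, V is continuous on [0,∞) and differentiable on (0,∞) with V'(t) = (1/2) ∫ ‖x − x*‖² ∂_t p(t,x) dx, and for each t the C¹ vector fields x ↦ (1/2)‖x − x*‖² ∇f(x) p(t,x), x ↦ (1/2)‖x − x*‖² Σ ∇_x p(t,x), and x ↦ p(t,x) Σ (x − x*) are integrable with integrable divergence whose integral over ℝ^d is zero. Then V(t) ≤ e^{−2κt} V(0) + Tr(Σ)/(4κ) for all t ≥ 0. -/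

import Mathlib

noncomputable section

open MeasureTheory
open scoped RealInnerProductSpace

/-- `ℝ^d` with the Euclidean structure. -/
abbrev Euc (d : ℕ) := EuclideanSpace ℝ (Fin d)

/-- Partial derivative `∂_{x_i} f` of a scalar function on `ℝ^d`. -/
def pd {d : ℕ} (i : Fin d) (f : Euc d → ℝ) (x : Euc d) : ℝ :=
  fderiv ℝ f x (EuclideanSpace.single i 1)

/-- Divergence `∇·G = ∑ i ∂_{x_i} G_i` of a vector field on `ℝ^d`. -/
def diverg {d : ℕ} (G : Euc d → Euc d) (x : Euc d) : ℝ :=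
  ∑ i, pd i (fun y => G y i) x

/-- A C¹ vector field that is Lebesgue-integrable, with integrable divergence whose
integral over `ℝ^d` vanishes. -/
def GoodField {d : ℕ} (G : Euc d → Euc d) : Prop :=
  ContDiff ℝ 1 G ∧ Integrable G volume ∧ Integrable (diverg G) volume ∧
    (∫ x, diverg G x) = 0

variable {d : ℕ}

lemma pd_mul (i : Fin d) (a b : Euc d → ℝ) (x : Euc d) (ha : DifferentiableAt ℝ a x)
    (hb : DifferentiableAt ℝ b x) :
    pd i (fun y => a y * b y) x = a x * pd i b x + pd i a x * b x := by
  unfold pd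
  rw [fderiv_fun_mul ha hb]
  simp [mul_comm]

lemma pd_const_mul (i : Fin d) (c : ℝ) (g : Euc d → ℝ) (x : Euc d)
    (hg : DifferentiableAt ℝ g x) :
    pd i (fun y => c * g y) x = c * pd i g x := by
  unfold pd
  rw [fderiv_const_mul hg]
  simp

lemma pd_sum (i : Fin d) (g : Fin d → Euc d → ℝ) (x : Euc d)
    (hg : ∀ j, DifferentiableAt ℝ (g j) x) :
    pd i (fun y => ∑ j, g j y) x = ∑ j, pd i (g j) x := by
  unfold pd
  rw [fderiv_fun_sum (fun j _ => hg j)]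
  simp

lemma gradient_apply (g : Euc d → ℝ) (x : Euc d) (i : Fin d) :
    gradient g x i = pd i g x := by
  have h1 : (⟪gradient g x, EuclideanSpace.single i (1:ℝ)⟫ : ℝ) = fderiv ℝ g x (EuclideanSpace.single i 1) := by
    rw [gradient, InnerProductSpace.toDual_symm_apply]
  rw [EuclideanSpace.inner_single_right] at h1
  simpa [pd] using h1

lemma hasFDerivAt_normsq (xs x : Euc d) :
    HasFDerivAt (fun y : Euc d => ‖y - xs‖ ^ 2)
      ((2:ℕ) • (innerSL ℝ (x - xs)).comp (ContinuousLinearMap.id ℝ (Euc d))) x := by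
  have h : HasFDerivAt (fun y : Euc d => y - xs) (ContinuousLinearMap.id ℝ (Euc d)) x :=
    (hasFDerivAt_id x).sub_const xs
  exact h.norm_sq

lemma pd_normsq (xs x : Euc d) (i : Fin d) :
    pd i (fun y => ‖y - xs‖ ^ 2) x = 2 * (x i - xs i) := by
  unfold pd
  rw [(hasFDerivAt_normsq xs x).fderiv]
  simp [EuclideanSpace.inner_single_right]

lemma contDiff_grad {g : Euc d → ℝ} (hg : ContDiff ℝ 2 g) : ContDiff ℝ 1 (gradient g) := by
  have h : ContDiff ℝ 1 (fun y => fderiv ℝ g y) := hg.fderiv_right (by norm_num)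
  exact (InnerProductSpace.toDual ℝ (Euc d)).symm.contDiff.comp h

lemma diff_normsq (xs : Euc d) : Differentiable ℝ (fun y : Euc d => ‖y - xs‖ ^ 2) := by
  have : Differentiable ℝ (fun y : Euc d => y - xs) := (differentiable_id).sub_const xs
  exact this.norm_sq ℝ

lemma diff_comp_proj {G : Euc d → Euc d} (hG : Differentiable ℝ G) (i : Fin d) :
    Differentiable ℝ (fun y => G y i) :=
  (EuclideanSpace.proj (𝕜 := ℝ) i).differentiable.comp hG

lemma pd_coord (i j : Fin d) (x : Euc d) :
    pd i (fun y : Euc d => y j) x = if j = i then 1 else 0 := by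
  unfold pd
  have : (fun y : Euc d => y j) = (EuclideanSpace.proj (𝕜 := ℝ) j) := rfl
  rw [this, ContinuousLinearMap.fderiv]
  simp [EuclideanSpace.single_apply]

lemma div_smul (c : Euc d → ℝ) (H : Euc d → Euc d) (x : Euc d)
    (hc : DifferentiableAt ℝ c x) (hH : ∀ i, DifferentiableAt ℝ (fun y => H y i) x) :
    diverg (fun y => c y • H y) x = c x * diverg H x + ∑ i, pd i c x * H x i := by
  unfold diverg
  have key : ∀ i, pd i (fun y => (c y • H y) i) x
      = c x * pd i (fun y => H y i) x + pd i c x * H x i := by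
    intro i
    have : (fun y => (c y • H y) i) = fun y => c y * H y i := by
      funext y; simp [PiLp.smul_apply]
    rw [this]
    unfold pd
    rw [fderiv_fun_mul hc (hH i)]
    simp [mul_comm]
  simp only [key]
  rw [Finset.sum_add_distrib, Finset.mul_sum]

lemma diff_pd {q : Euc d → ℝ} (hq : ContDiff ℝ 2 q) (j : Fin d) :
    Differentiable ℝ (pd j q) := by
  have : pd j q = fun y => gradient q y j := by
    funext y; rw [gradient_apply]
  rw [this]
  exact diff_comp_proj ((contDiff_grad hq).differentiable one_ne_zero) j

lemma euc_inner_eq (u v : Euc d) : ⟪u, v⟫ = ∑ i, u i * v i := by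
  simp [PiLp.inner_apply, RCLike.inner_apply, conj_trivial]
  exact Finset.sum_congr rfl fun _ _ => mul_comm _ _

lemma toEuclideanLin_comp (Sig : Matrix (Fin d) (Fin d) ℝ) (v : Euc d) (i : Fin d) :
    Matrix.toEuclideanLin Sig v i = ∑ j, Sig i j * v j := by
  rw [Matrix.toEuclideanLin_apply]
  simp [Matrix.mulVec, dotProduct]

lemma div_field1 {f q : Euc d → ℝ} (hf : ContDiff ℝ 2 f) (hq : ContDiff ℝ 2 q)
    (xs x : Euc d) :
    diverg (fun y => ((1/2) * ‖y - xs‖ ^ 2 * q y) • gradient f y) x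
      = (1/2) * ‖x - xs‖ ^ 2 * diverg (fun y => q y • gradient f y) x
        + q x * ⟪gradient f x, x - xs⟫ := by
  have hu : Differentiable ℝ (gradient f) := (contDiff_grad hf).differentiable one_ne_zero
  have hq' : Differentiable ℝ q := hq.differentiable (by norm_num)
  have hψ : Differentiable ℝ (fun y : Euc d => (1/2) * ‖y - xs‖ ^ 2) :=
    (diff_normsq xs).const_mul _
  have hH : ∀ i, DifferentiableAt ℝ (fun y => (q y • gradient f y) i) x := by
    intro i
    have e : (fun y => (q y • gradient f y) i) = fun y => q y * gradient f y i := by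
      funext y; simp [PiLp.smul_apply]
    rw [e]; exact (hq' x).mul ((diff_comp_proj hu i) x)
  have rw1 : (fun y => ((1/2) * ‖y - xs‖ ^ 2 * q y) • gradient f y)
      = fun y => ((1/2) * ‖y - xs‖ ^ 2) • (q y • gradient f y) := by
    funext y; rw [mul_smul]
  rw [rw1, div_smul _ _ x (hψ x) hH]
  congr 1
  have hpdψ : ∀ i, pd i (fun y : Euc d => (1/2) * ‖y - xs‖ ^ 2) x = x i - xs i := by
    intro i
    rw [pd_const_mul _ _ _ _ ((diff_normsq xs) x), pd_normsq]; ring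
  simp only [hpdψ, PiLp.smul_apply, smul_eq_mul]
  rw [euc_inner_eq, Finset.mul_sum]
  apply Finset.sum_congr rfl
  intro i _
  simp [PiLp.sub_apply]
  ring

lemma div_field2 (Sig : Matrix (Fin d) (Fin d) ℝ) {q : Euc d → ℝ} (hq : ContDiff ℝ 2 q)
    (xs x : Euc d) :
    diverg (fun y => ((1/2) * ‖y - xs‖ ^ 2) • Matrix.toEuclideanLin Sig (gradient q y)) x
      = (1/2) * ‖x - xs‖ ^ 2 * (∑ i, ∑ j, Sig i j * pd i (pd j q) x)
        + ∑ i, (x i - xs i) * (∑ j, Sig i j * pd j q x) := by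
  have hψ : Differentiable ℝ (fun y : Euc d => (1/2) * ‖y - xs‖ ^ 2) :=
    (diff_normsq xs).const_mul _
  have hcomp : ∀ i, (fun y => (Matrix.toEuclideanLin Sig (gradient q y)) i)
      = fun y => ∑ j, Sig i j * pd j q y := by
    intro i; funext y
    rw [toEuclideanLin_comp]
    exact Finset.sum_congr rfl fun j _ => by rw [gradient_apply]
  have hH : ∀ i, DifferentiableAt ℝ
      (fun y => (Matrix.toEuclideanLin Sig (gradient q y)) i) x := by
    intro i
    rw [hcomp i]
    exact DifferentiableAt.fun_sum fun j _ => ((diff_pd hq j) x).const_mul _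
  rw [div_smul _ _ x (hψ x) hH]
  have hdiv : diverg (fun y => Matrix.toEuclideanLin Sig (gradient q y)) x
      = ∑ i, ∑ j, Sig i j * pd i (pd j q) x := by
    unfold diverg
    apply Finset.sum_congr rfl
    intro i _
    rw [hcomp i, pd_sum _ _ _ (fun j => ((diff_pd hq j) x).const_mul _)]
    exact Finset.sum_congr rfl fun j _ => pd_const_mul _ _ _ _ ((diff_pd hq j) x)
  rw [hdiv]
  congr 1
  apply Finset.sum_congr rfl
  intro i _
  rw [pd_const_mul _ _ _ _ ((diff_normsq xs) x), pd_normsq]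
  have : (fun y => (Matrix.toEuclideanLin Sig (gradient q y)) i) x
      = ∑ j, Sig i j * pd j q x := by rw [hcomp i]
  simp only at this
  rw [this]
  ring

lemma div_field3 (Sig : Matrix (Fin d) (Fin d) ℝ) {q : Euc d → ℝ} (hq : ContDiff ℝ 2 q)
    (xs x : Euc d) :
    diverg (fun y => q y • Matrix.toEuclideanLin Sig (y - xs)) x
      = q x * Matrix.trace Sig + ∑ i, pd i q x * (∑ j, Sig i j * (x j - xs j)) := by
  have hq' : Differentiable ℝ q := hq.differentiable (by norm_num)
  have hcomp : ∀ i, (fun y : Euc d => (Matrix.toEuclideanLin Sig (y - xs)) i)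
      = fun y => ∑ j, Sig i j * (y j - xs j) := by
    intro i; funext y
    rw [toEuclideanLin_comp]
    exact Finset.sum_congr rfl fun j _ => by rw [PiLp.sub_apply]
  have hco : ∀ j, Differentiable ℝ (fun y : Euc d => y j - xs j) := by
    intro j
    exact (diff_comp_proj differentiable_id j).sub_const _
  have hH : ∀ i, DifferentiableAt ℝ (fun y : Euc d => (Matrix.toEuclideanLin Sig (y - xs)) i) x := by
    intro i
    rw [hcomp i]
    exact DifferentiableAt.fun_sum fun j _ => ((hco j) x).const_mul _
  rw [div_smul _ _ x (hq' x) hH]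
  have hdiv : diverg (fun y : Euc d => Matrix.toEuclideanLin Sig (y - xs)) x
      = Matrix.trace Sig := by
    unfold diverg
    rw [Matrix.trace]
    apply Finset.sum_congr rfl
    intro i _
    rw [hcomp i, pd_sum i (fun j y => Sig i j * (y j - xs j)) x (fun j => ((hco j) x).const_mul _)]
    have : ∀ j, pd i (fun y : Euc d => Sig i j * (y j - xs j)) x
        = Sig i j * (if j = i then 1 else 0) := by
      intro j
      rw [pd_const_mul _ _ _ _ ((hco j) x)]
      congr 1
      have e : (fun y : Euc d => y j - xs j) = fun y : Euc d => (fun z : Euc d => z j) y - xs j := rfl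
      unfold pd
      rw [e, fderiv_sub_const]
      have := pd_coord (d := d) i j x
      unfold pd at this
      rw [this]
    simp only [this]
    simp [Matrix.diag]
  rw [hdiv]
  simp only [toEuclideanLin_comp, PiLp.sub_apply]

lemma cross_swap (Sig : Matrix (Fin d) (Fin d) ℝ) (hSym : ∀ i j, Sig i j = Sig j i)
    (v w : Fin d → ℝ) :
    ∑ i, v i * (∑ j, Sig i j * w j) = ∑ i, w i * (∑ j, Sig i j * v j) := by
  simp only [Finset.mul_sum]
  rw [Finset.sum_comm]
  apply Finset.sum_congr rfl; intro i _
  apply Finset.sum_congr rfl; intro j _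
  rw [hSym j i]; ring

lemma trace_nonneg_of_psd (Sig : Matrix (Fin d) (Fin d) ℝ) (hSig : Sig.PosSemidef) :
    0 ≤ Matrix.trace Sig := by
  rw [Matrix.trace]
  apply Finset.sum_nonneg
  intro i _
  have := hSig.diag_nonneg (i := i)
  simpa [Matrix.diag] using this

lemma h_integrable {f q : Euc d → ℝ} (hf : ContDiff ℝ 2 f) (hq : ContDiff ℝ 2 q)
    (hqnn : ∀ x, 0 ≤ q x) (xs : Euc d)
    (hint : Integrable (fun x => ((1/2) * ‖x - xs‖ ^ 2 * q x) • gradient f x) volume) :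
    Integrable (fun x => q x * ⟪gradient f x, x - xs⟫) volume := by
  set h : Euc d → ℝ := fun x => q x * ⟪gradient f x, x - xs⟫ with hh
  have hcont : Continuous h := by
    apply (hq.continuous).mul
    exact Continuous.inner ((contDiff_grad hf).continuous) (continuous_id.sub continuous_const)
  have hball : IntegrableOn h (Metric.closedBall xs 1) volume :=
    hcont.continuousOn.integrableOn_compact (isCompact_closedBall xs 1)
  have hcompl : IntegrableOn h (Metric.closedBall xs 1)ᶜ volume := by
    apply Integrable.mono' (g := fun x => 2 * ‖((1/2) * ‖x - xs‖ ^ 2 * q x) • gradient f x‖)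
    · exact (hint.norm.const_mul 2).integrableOn
    · exact hcont.aestronglyMeasurable.restrict
    · rw [MeasureTheory.ae_restrict_iff' measurableSet_closedBall.compl]
      filter_upwards with x hx
      have h1 : (1:ℝ) ≤ ‖x - xs‖ := by
        simp only [Set.mem_compl_iff, Metric.mem_closedBall, not_le] at hx
        rw [← dist_eq_norm]; exact hx.le
      have h2 : |⟪gradient f x, x - xs⟫| ≤ ‖gradient f x‖ * ‖x - xs‖ :=
        abs_real_inner_le_norm _ _
      have h3 : ‖((1/2) * ‖x - xs‖ ^ 2 * q x) • gradient f x‖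
          = (1/2) * ‖x - xs‖ ^ 2 * q x * ‖gradient f x‖ := by
        rw [norm_smul, Real.norm_eq_abs,
          abs_of_nonneg (mul_nonneg (by positivity) (hqnn x))]
      have h4 : ‖h x‖ = q x * |⟪gradient f x, x - xs⟫| := by
        rw [hh, Real.norm_eq_abs, abs_mul, abs_of_nonneg (hqnn x)]
      rw [h4, h3]
      nlinarith [hqnn x, norm_nonneg (gradient f x), norm_nonneg (x - xs),
        mul_le_mul_of_nonneg_left h2 (hqnn x),
        mul_nonneg (hqnn x) (norm_nonneg (gradient f x)),
        mul_le_mul_of_nonneg_left h1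
          (mul_nonneg (mul_nonneg (hqnn x) (norm_nonneg (gradient f x))) (norm_nonneg (x - xs)))]
  have hun := hcompl.union hball
  rw [Set.compl_union_self] at hun
  rw [← integrableOn_univ]
  exact hun


/-- Convergence lemma for Langevin dynamics (Fokker–Planck formulation): the mean squared
distance to the minimizer decays exponentially up to the noise floor `Tr(Σ)/(4κ)`. -/
theorem langevin_second_moment_convergence {d : ℕ}
    (Sig : Matrix (Fin d) (Fin d) ℝ) (hSig : Sig.PosSemidef)
    (f : Euc d → ℝ) (hf : ContDiff ℝ 2 f) (κ : ℝ) (hκ : 0 < κ)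
    (hconv : ∀ x y, κ * ‖x - y‖ ^ 2 ≤ ⟪gradient f x - gradient f y, x - y⟫)
    (xs : Euc d) (hxs : gradient f xs = 0)
    (p : ℝ → Euc d → ℝ)
    (hpnn : ∀ t ≥ (0:ℝ), ∀ x, 0 ≤ p t x)
    (hpdens : ∀ t ≥ (0:ℝ), ∫ x, p t x = 1)
    (hpx : ∀ t ≥ (0:ℝ), ContDiff ℝ 2 (p t))
    (hpt : ∀ t ≥ (0:ℝ), ∀ x, DifferentiableAt ℝ (fun s => p s x) t)
    -- the Fokker–Planck equation `∂_t p = ∇·(∇f · p) + (1/2)∑ Σ_{ij} ∂²_{ij} p`, pointwise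
    (hFP : ∀ t ≥ (0:ℝ), ∀ x, deriv (fun s => p s x) t =
      diverg (fun y => p t y • gradient f y) x
        + (1 / 2) * ∑ i, ∑ j, Sig i j * pd i (pd j (p t)) x)
    (V : ℝ → ℝ) (hV : ∀ t, V t = (1 / 2) * ∫ x, ‖x - xs‖ ^ 2 * p t x)
    -- `V(t) < ∞`
    (hVfin : ∀ t ≥ (0:ℝ), Integrable (fun x => ‖x - xs‖ ^ 2 * p t x) volume)
    (hVcont : ContinuousOn V (Set.Ici 0))
    -- differentiation under the integral
    (hVderiv : ∀ t > (0:ℝ), HasDerivAt V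
      ((1 / 2) * ∫ x, ‖x - xs‖ ^ 2 * deriv (fun s => p s x) t) t)
    -- vanishing boundary terms
    (hG1 : ∀ t ≥ (0:ℝ), GoodField fun x =>
      ((1 / 2) * ‖x - xs‖ ^ 2 * p t x) • gradient f x)
    (hG2 : ∀ t ≥ (0:ℝ), GoodField fun x =>
      ((1 / 2) * ‖x - xs‖ ^ 2) • Matrix.toEuclideanLin Sig (gradient (p t) x))
    (hG3 : ∀ t ≥ (0:ℝ), GoodField fun x =>
      p t x • Matrix.toEuclideanLin Sig (x - xs)) :
    ∀ t ≥ (0:ℝ), V t ≤ Real.exp (-2 * κ * t) * V 0 + Matrix.trace Sig / (4 * κ) := by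
  have hSym : ∀ i j, Sig i j = Sig j i := by
    intro i j
    have h := hSig.1.apply i j
    simp at h
    exact h.symm
  have htr : 0 ≤ Matrix.trace Sig := trace_nonneg_of_psd Sig hSig
  have hbound : ∀ s ≥ (0:ℝ),
      (1 / 2) * ∫ x, ‖x - xs‖ ^ 2 * deriv (fun u => p u x) s
        ≤ Matrix.trace Sig / 2 - 2 * κ * V s := by
    intro s hs
    have hq := hpx s hs
    have Ih : Integrable (fun x => p s x * ⟪gradient f x, x - xs⟫) volume :=
      h_integrable hf hq (hpnn s hs) xs (hG1 s hs).2.1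
    have Ip : Integrable (p s) volume := by
      by_contra hni
      have hd := hpdens s hs
      rw [integral_undef hni] at hd
      norm_num at hd
    have IA := (hG1 s hs).2.2.1
    have IB := (hG2 s hs).2.2.1
    have IC := (hG3 s hs).2.2.1
    have hkey : ∀ x, ‖x - xs‖ ^ 2 * deriv (fun u => p u x) s
        = 2 * diverg (fun y => ((1 / 2) * ‖y - xs‖ ^ 2 * p s y) • gradient f y) x
          + diverg (fun y => ((1 / 2) * ‖y - xs‖ ^ 2) •
              Matrix.toEuclideanLin Sig (gradient (p s) y)) x
          - diverg (fun y => p s y • Matrix.toEuclideanLin Sig (y - xs)) x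
          + Matrix.trace Sig * p s x
          - 2 * (p s x * ⟪gradient f x, x - xs⟫) := by
      intro x
      rw [hFP s hs x, div_field1 hf hq, div_field2 Sig hq, div_field3 Sig hq]
      have hc := cross_swap Sig hSym (fun i => x i - xs i) (fun i => pd i (p s) x)
      simp only at hc
      rw [hc]
      ring
    have hIeq : ∫ x, ‖x - xs‖ ^ 2 * deriv (fun u => p u x) s
        = Matrix.trace Sig - 2 * ∫ x, p s x * ⟪gradient f x, x - xs⟫ := by
      rw [integral_congr_ae (Filter.Eventually.of_forall hkey)]
      have hq3 : Integrable (fun x =>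
          2 * diverg (fun y => ((1 / 2) * ‖y - xs‖ ^ 2 * p s y) • gradient f y) x
            + diverg (fun y => ((1 / 2) * ‖y - xs‖ ^ 2) •
                Matrix.toEuclideanLin Sig (gradient (p s) y)) x) volume :=
        (IA.const_mul 2).add IB
      have hq2 : Integrable (fun x =>
          2 * diverg (fun y => ((1 / 2) * ‖y - xs‖ ^ 2 * p s y) • gradient f y) x
            + diverg (fun y => ((1 / 2) * ‖y - xs‖ ^ 2) •
                Matrix.toEuclideanLin Sig (gradient (p s) y)) x
            - diverg (fun y => p s y • Matrix.toEuclideanLin Sig (y - xs)) x) volume :=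
        hq3.sub IC
      have hq1 : Integrable (fun x =>
          2 * diverg (fun y => ((1 / 2) * ‖y - xs‖ ^ 2 * p s y) • gradient f y) x
            + diverg (fun y => ((1 / 2) * ‖y - xs‖ ^ 2) •
                Matrix.toEuclideanLin Sig (gradient (p s) y)) x
            - diverg (fun y => p s y • Matrix.toEuclideanLin Sig (y - xs)) x
            + Matrix.trace Sig * p s x) volume :=
        hq2.add (Ip.const_mul (Matrix.trace Sig))
      rw [integral_sub hq1 (Ih.const_mul 2), integral_add hq2 (Ip.const_mul _),
        integral_sub hq3 IC, integral_add (IA.const_mul 2) IB,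
        integral_const_mul, integral_const_mul, integral_const_mul,
        (hG1 s hs).2.2.2, (hG2 s hs).2.2.2, (hG3 s hs).2.2.2, hpdens s hs]
      ring
    have hmono : 2 * κ * V s ≤ ∫ x, p s x * ⟪gradient f x, x - xs⟫ := by
      have hpt2 : ∀ x, κ * (‖x - xs‖ ^ 2 * p s x) ≤ p s x * ⟪gradient f x, x - xs⟫ := by
        intro x
        have h1 := hconv x xs
        rw [hxs, sub_zero] at h1
        nlinarith [mul_le_mul_of_nonneg_left h1 (hpnn s hs x)]
      have hle := integral_mono ((hVfin s hs).const_mul κ) Ih hpt2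
      rw [integral_const_mul] at hle
      have heq2 : 2 * κ * V s = κ * ∫ x, ‖x - xs‖ ^ 2 * p s x := by
        rw [hV s]; ring
      linarith
    rw [hIeq]
    linarith
  -- Gronwall
  have h2κc4 : 2 * κ * (Matrix.trace Sig / (4 * κ)) = Matrix.trace Sig / 2 := by
    field_simp
    ring
  have hW' : ∀ u > (0:ℝ), HasDerivAt
      (fun u => Real.exp (2 * κ * u) * (V u - Matrix.trace Sig / (4 * κ)))
      (Real.exp (2 * κ * u) * (2 * κ) * (V u - Matrix.trace Sig / (4 * κ))
        + Real.exp (2 * κ * u) *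
          ((1 / 2) * ∫ x, ‖x - xs‖ ^ 2 * deriv (fun s => p s x) u)) u := by
    intro u hu
    have he : HasDerivAt (fun u : ℝ => Real.exp (2 * κ * u))
        (Real.exp (2 * κ * u) * (2 * κ)) u := by
      have h0 : HasDerivAt (fun u : ℝ => 2 * κ * u) (2 * κ) u := by
        simpa using (hasDerivAt_id u).const_mul (2 * κ)
      exact h0.exp
    exact he.mul ((hVderiv u hu).sub_const _)
  have hanti : AntitoneOn
      (fun u => Real.exp (2 * κ * u) * (V u - Matrix.trace Sig / (4 * κ)))
      (Set.Ici 0) := by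
    apply antitoneOn_of_deriv_nonpos (convex_Ici 0)
    · exact ((Real.continuous_exp.comp (continuous_const.mul continuous_id)).continuousOn).mul
        (hVcont.sub continuousOn_const)
    · rw [interior_Ici]
      intro u hu
      exact ((hW' u hu).differentiableAt).differentiableWithinAt
    · rw [interior_Ici]
      intro u hu
      rw [(hW' u hu).deriv]
      have hb := hbound u (le_of_lt hu)
      nlinarith [Real.exp_pos (2 * κ * u), hb, h2κc4]
  intro t ht
  have hWt : Real.exp (2 * κ * t) * (V t - Matrix.trace Sig / (4 * κ))
      ≤ Real.exp (2 * κ * 0) * (V 0 - Matrix.trace Sig / (4 * κ)) :=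
    hanti Set.self_mem_Ici ht ht
  rw [mul_zero, Real.exp_zero, one_mul] at hWt
  have hE : Real.exp (-2 * κ * t) * Real.exp (2 * κ * t) = 1 := by
    rw [← Real.exp_add, show -2 * κ * t + 2 * κ * t = 0 by ring, Real.exp_zero]
  have hc4nn : (0:ℝ) ≤ Matrix.trace Sig / (4 * κ) := by positivity
  have h5 : V t - Matrix.trace Sig / (4 * κ)
      ≤ Real.exp (-2 * κ * t) * (V 0 - Matrix.trace Sig / (4 * κ)) := by
    calc V t - Matrix.trace Sig / (4 * κ)
        = (Real.exp (-2 * κ * t) * Real.exp (2 * κ * t))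
            * (V t - Matrix.trace Sig / (4 * κ)) := by rw [hE]; ring
      _ = Real.exp (-2 * κ * t)
            * (Real.exp (2 * κ * t) * (V t - Matrix.trace Sig / (4 * κ))) := by ring
      _ ≤ Real.exp (-2 * κ * t) * (V 0 - Matrix.trace Sig / (4 * κ)) :=
          mul_le_mul_of_nonneg_left hWt (Real.exp_pos (-2 * κ * t)).le
  have h6 : 0 ≤ Real.exp (-2 * κ * t) * (Matrix.trace Sig / (4 * κ)) :=
    mul_nonneg (Real.exp_pos (-2 * κ * t)).le hc4nn
  nlinarith [h5, h6]

end
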